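/- Let Γ be a measurable subset of [-1,1] with positive Lebesgue measure. Then there exists an integer l ≥ 0 with 2^{-l} ≥ c·Leb(Γ) for an absolute constant c > 0, such that the set S = {t ∈ [0, 2^{-l}) : the arithmetic progression t + ℤ·2^{-l} meets Γ in at least 2 points} has Lebesgue measure at least c'·Leb(Γ)/(1 + |log Leb(Γ)|) for an absolute constant c' > 0. -/

import Mathlib

/-!
Represent ℝ/hℤ by [0, h) and let A_h (`modProj`) be the image of Γ and S_h (`modCollisions`) the
residues hit at least twice. Halving the modulus folds [0, 2h) onto [0, h) via t ↦ t and
t ↦ t - h, whence |A_{2h}| ≤ |A_h| + |S_h|. Since |A_1| ≥ |Γ|/2 and |A_h| ≤ h, telescoping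
down to the first dyadic scale 2^{-L} below |Γ|/4 shows that S_{2^{-1}}, …, S_{2^{-L}} have total
measure at least |Γ|/4, where L = O(1 + |log |Γ||); by pigeonhole one of them has measure ≳ |Γ|/L.
-/

open MeasureTheory Set Finset

def modProj (Γ : Set ℝ) (h : ℝ) : Set ℝ :=
  {t | t ∈ Ico (0:ℝ) h ∧ ∃ j : ℤ, t + (j:ℝ) * h ∈ Γ}

def modCollisions (Γ : Set ℝ) (h : ℝ) : Set ℝ :=
  {t : ℝ | t ∈ Ico (0:ℝ) h ∧ ∃ j j' : ℤ, j ≠ j' ∧ t + (j:ℝ) * h ∈ Γ ∧ t + (j':ℝ) * h ∈ Γ}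

lemma le_add_sum_range_of_le_add {M : Type*} [AddCommMonoid M] [PartialOrder M]
    [IsOrderedAddMonoid M] {a s : ℕ → M} (h : ∀ n, a n ≤ a (n + 1) + s n) :
    ∀ L, a 0 ≤ a L + ∑ n ∈ range L, s n
  | 0 => by simp
  | L + 1 => calc
      a 0 ≤ a L + ∑ n ∈ range L, s n := le_add_sum_range_of_le_add h L
      _ ≤ a (L + 1) + s L + ∑ n ∈ range L, s n := by gcongr; exact h L
      _ = a (L + 1) + ∑ n ∈ range (L + 1), s n := by rw [sum_range_succ]; abel

section modProj

variable {Γ : Set ℝ}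

lemma measurableSet_modProj (hΓ : MeasurableSet Γ) (h : ℝ) : MeasurableSet (modProj Γ h) := by
  have : modProj Γ h = Ico 0 h ∩ ⋃ j : ℤ, (· + (j:ℝ) * h) ⁻¹' Γ := by
    ext t; simp [modProj]
  rw [this]
  exact measurableSet_Ico.inter <| .iUnion fun j => measurable_add_const _ hΓ

lemma volume_modProj_le (Γ : Set ℝ) (h : ℝ) : volume (modProj Γ h) ≤ ENNReal.ofReal h := by
  simpa using measure_mono (μ := volume) fun t (ht : t ∈ modProj Γ h) => ht.1

lemma volume_modCollisions_ne_top (Γ : Set ℝ) (h : ℝ) : volume (modCollisions Γ h) ≠ ⊤ :=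
  ne_top_of_le_ne_top (by simp) (measure_mono fun t (ht : t ∈ modCollisions Γ h) => ht.1)

lemma volume_inter_Ico_le_volume_modProj (Γ : Set ℝ) (h : ℝ) (k : ℤ) :
    volume (Γ ∩ Ico (k * h) (k * h + h)) ≤ volume (modProj Γ h) := by
  have hsub : Γ ∩ Ico (k * h) (k * h + h) ⊆ (· + -(k * h)) ⁻¹' modProj Γ h := by
    rintro x ⟨hx, hlo, hhi⟩
    exact ⟨⟨by linarith, by linarith⟩, k, by simpa using hx⟩
  exact (measure_mono hsub).trans_eq (measure_preimage_add_right _ _ _)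

lemma volume_le_two_mul_volume_modProj_one (hsub : Γ ⊆ Icc (-1) 1) :
    volume Γ ≤ 2 * volume (modProj Γ 1) := by
  have hneg : volume (Γ ∩ Ico (-1) 0) ≤ volume (modProj Γ 1) := by
    simpa using volume_inter_Ico_le_volume_modProj Γ 1 (-1)
  have hnonneg : volume (Γ ∩ Ico 0 1) ≤ volume (modProj Γ 1) := by
    simpa using volume_inter_Ico_le_volume_modProj Γ 1 0
  have hcover : Γ \ {1} ⊆ (Γ ∩ Ico (-1) 0) ∪ (Γ ∩ Ico 0 1) := by
    rintro x ⟨hx, hx1⟩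
    obtain ⟨hlo, hhi⟩ := hsub hx
    rcases lt_or_ge x 0 with hx0 | hx0
    · exact Or.inl ⟨hx, hlo, hx0⟩
    · exact Or.inr ⟨hx, hx0, lt_of_le_of_ne hhi hx1⟩
  calc volume Γ = volume (Γ \ {1}) := (measure_sdiff_null (measure_singleton 1)).symm
    _ ≤ volume (Γ ∩ Ico (-1) 0) + volume (Γ ∩ Ico 0 1) :=
      (measure_mono hcover).trans (measure_union_le _ _)
    _ ≤ 2 * volume (modProj Γ 1) := by rw [two_mul]; gcongr

lemma volume_modProj_two_mul_le (hΓ : MeasurableSet Γ) (h : ℝ) :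
    volume (modProj Γ (2 * h)) ≤ volume (modProj Γ h) + volume (modCollisions Γ h) := by
  set B₁ := modProj Γ (2 * h) ∩ Ico 0 h
  set B₂ := (· + h) ⁻¹' (modProj Γ (2 * h) ∩ Ico h (2 * h))
  have hB₂ : MeasurableSet B₂ :=
    measurable_add_const h ((measurableSet_modProj hΓ _).inter measurableSet_Ico)
  have heven (t : ℝ) (j : ℤ) : t + ((2 * j : ℤ) : ℝ) * h = t + j * (2 * h) := by push_cast; ring
  have hodd (t : ℝ) (j : ℤ) : t + ((2 * j + 1 : ℤ) : ℝ) * h = t + h + j * (2 * h) := by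
    push_cast; ring
  have hcover : modProj Γ (2 * h) ⊆ B₁ ∪ (modProj Γ (2 * h) ∩ Ico h (2 * h)) := by
    intro t ht
    rcases lt_or_ge t h with hlt | hge
    · exact Or.inl ⟨ht, ht.1.1, hlt⟩
    · exact Or.inr ⟨ht, hge, ht.1.2⟩
  have hB₁ : B₁ ⊆ modProj Γ h := by
    rintro t ⟨⟨-, j, hj⟩, ht⟩
    exact ⟨ht, 2 * j, by rwa [heven]⟩
  have hB₂' : B₂ ⊆ modProj Γ h := by
    rintro t ⟨⟨-, j, hj⟩, hlo, hhi⟩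
    exact ⟨⟨by linarith, by linarith⟩, 2 * j + 1, by rwa [hodd]⟩
  have hB₁₂ : B₁ ∩ B₂ ⊆ modCollisions Γ h := by
    rintro t ⟨⟨⟨-, j, hj⟩, ht⟩, ⟨-, j', hj'⟩, -⟩
    exact ⟨ht, 2 * j, 2 * j' + 1, by omega, by rwa [heven], by rwa [hodd]⟩
  calc volume (modProj Γ (2 * h))
      ≤ volume B₁ + volume (modProj Γ (2 * h) ∩ Ico h (2 * h)) :=
        (measure_mono hcover).trans (measure_union_le _ _)
    _ = volume B₁ + volume B₂ := by rw [measure_preimage_add_right]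
    _ = volume (B₁ ∪ B₂) + volume (B₁ ∩ B₂) := (measure_union_add_inter B₁ hB₂).symm
    _ ≤ volume (modProj Γ h) + volume (modCollisions Γ h) :=
        add_le_add (measure_mono (union_subset hB₁ hB₂')) (measure_mono hB₁₂)

lemma volume_le_two_mul_add_sum_volume_modCollisions (hsub : Γ ⊆ Icc (-1) 1)
    (hΓ : MeasurableSet Γ) (L : ℕ) :
    volume Γ ≤ 2 * (ENNReal.ofReal ((2⁻¹ : ℝ) ^ L) +
      ∑ l ∈ range L, volume (modCollisions Γ ((2⁻¹ : ℝ) ^ (l + 1)))) := by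
  have hfold (n : ℕ) : volume (modProj Γ ((2⁻¹ : ℝ) ^ n)) ≤
      volume (modProj Γ ((2⁻¹ : ℝ) ^ (n + 1))) +
        volume (modCollisions Γ ((2⁻¹ : ℝ) ^ (n + 1))) := by
    have : (2⁻¹ : ℝ) ^ n = 2 * (2⁻¹ : ℝ) ^ (n + 1) := by ring
    rw [this]
    exact volume_modProj_two_mul_le hΓ _
  calc volume Γ ≤ 2 * volume (modProj Γ ((2⁻¹ : ℝ) ^ 0)) := by
        simpa using volume_le_two_mul_volume_modProj_one hsub
    _ ≤ _ := by
        gcongr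
        refine (le_add_sum_range_of_le_add hfold L).trans ?_
        gcongr
        exact volume_modProj_le _ _

lemma toReal_volume_le_two_mul_add_sum (hsub : Γ ⊆ Icc (-1) 1)
    (hΓ : MeasurableSet Γ) (L : ℕ) :
    (volume Γ).toReal ≤ 2 * ((2⁻¹ : ℝ) ^ L +
      ∑ l ∈ range L, (volume (modCollisions Γ ((2⁻¹ : ℝ) ^ (l + 1)))).toReal) := by
  have hfin : 2 * (ENNReal.ofReal ((2⁻¹ : ℝ) ^ L) +
      ∑ l ∈ range L, volume (modCollisions Γ ((2⁻¹ : ℝ) ^ (l + 1)))) ≠ ⊤ := by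
    simp [ENNReal.mul_eq_top, ENNReal.sum_eq_top, volume_modCollisions_ne_top]
  have := ENNReal.toReal_mono hfin (volume_le_two_mul_add_sum_volume_modCollisions hsub hΓ L)
  rwa [ENNReal.toReal_mul, ENNReal.toReal_add ENNReal.ofReal_ne_top
    (ENNReal.sum_ne_top.2 fun _ _ => volume_modCollisions_ne_top _ _), ENNReal.toReal_sum
    (fun _ _ => volume_modCollisions_ne_top _ _), ENNReal.toReal_ofReal (by positivity)] at this

end modProj

lemma exists_inv_two_pow_succ_mem_Ico {x : ℝ} (hx0 : 0 < x) (hx1 : x ≤ 1) :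
    ∃ n : ℕ, (2⁻¹ : ℝ) ^ (n + 1) ∈ Ico (x / 2) x ∧ (n : ℝ) ≤ 2 * |Real.log x| := by
  obtain ⟨n, hle, hlt⟩ := exists_nat_pow_near (one_le_inv₀ hx0 |>.2 hx1) one_lt_two
  refine ⟨n, ⟨?_, ?_⟩, ?_⟩
  · rw [pow_succ, inv_pow]
    have := (le_inv_comm₀ (by positivity) hx0).1 hle
    linarith
  · rw [inv_pow]
    exact (inv_lt_comm₀ (by positivity) hx0).2 hlt
  · have hlog : n * Real.log 2 ≤ -Real.log x := by
      rw [← Real.log_pow, ← Real.log_inv]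
      exact Real.log_le_log (by positivity) hle
    nlinarith [Real.log_two_gt_d9, neg_le_abs (Real.log x)]

lemma exists_dyadic_scale {m : ℝ} (hm0 : 0 < m) (hm2 : m ≤ 2) :
    ∃ L : ℕ, 0 < L ∧ m / 8 ≤ (2⁻¹ : ℝ) ^ L ∧ (2⁻¹ : ℝ) ^ L < m / 4 ∧
      (L : ℝ) ≤ 4 * (1 + |Real.log m|) := by
  obtain ⟨n, ⟨hlo, hhi⟩, hn⟩ := exists_inv_two_pow_succ_mem_Ico (x := m / 4) (by positivity)
    (by linarith)
  have hlog : |Real.log (m / 4)| ≤ |Real.log m| + 3 / 2 := by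
    rw [Real.log_div hm0.ne' four_ne_zero]
    have h4 : Real.log 4 = 2 * Real.log 2 := by
      rw [show (4 : ℝ) = 2 ^ 2 by norm_num, Real.log_pow]; norm_num
    calc _ ≤ |Real.log m| + |Real.log 4| := abs_sub _ _
      _ ≤ _ := by
        rw [abs_of_pos (Real.log_pos (by norm_num : (1 : ℝ) < 4))]
        linarith [Real.log_two_lt_d9]
  refine ⟨n + 1, n.succ_pos, by linarith, hhi, ?_⟩
  push_cast
  linarith [abs_nonneg (Real.log m)]

theorem stmt_0 :
    ∃ c > (0:ℝ), ∃ c' > (0:ℝ), ∀ Γ : Set ℝ, Γ ⊆ Icc (-1) 1 → MeasurableSet Γ →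
      0 < volume Γ →
      ∃ l : ℕ,
        c * (volume Γ).toReal ≤ (2:ℝ) ^ (-(l:ℝ)) ∧
        c' * (volume Γ).toReal / (1 + |Real.log ((volume Γ).toReal)|) ≤
          (volume {t : ℝ | t ∈ Ico (0:ℝ) ((2:ℝ) ^ (-(l:ℝ))) ∧
            ∃ j j' : ℤ, j ≠ j' ∧ t + (j:ℝ) * (2:ℝ) ^ (-(l:ℝ)) ∈ Γ ∧
              t + (j':ℝ) * (2:ℝ) ^ (-(l:ℝ)) ∈ Γ}).toReal := by
  refine ⟨1 / 8, by norm_num, 1 / 16, by norm_num, fun Γ hsub hΓ hpos => ?_⟩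
  have hscale (l : ℕ) : (2 : ℝ) ^ (-(l : ℝ)) = (2⁻¹ : ℝ) ^ l := by
    rw [Real.rpow_neg zero_le_two, Real.rpow_natCast, inv_pow]
  simp only [hscale]
  change ∃ l : ℕ, _ ∧ _ ≤ (volume (modCollisions Γ _)).toReal
  set m := (volume Γ).toReal
  set σ : ℕ → ℝ := fun l => (volume (modCollisions Γ ((2⁻¹ : ℝ) ^ l))).toReal
  have hbound : ∀ L, m ≤ 2 * ((2⁻¹ : ℝ) ^ L + ∑ l ∈ range L, σ (l + 1)) :=
    toReal_volume_le_two_mul_add_sum hsub hΓ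
  have hm0 : 0 < m := ENNReal.toReal_pos hpos.ne' <|
    ne_top_of_le_ne_top (by simp) (measure_mono hsub)
  obtain ⟨L, hL0, hlo, hhi, hlog⟩ := exists_dyadic_scale hm0 (by simpa using hbound 0)
  obtain ⟨l, hl, hσ⟩ : ∃ l ∈ range L, m / (4 * L) < σ (l + 1) := by
    refine exists_lt_of_sum_lt ?_
    have hL : (L : ℝ) * (m / (4 * L)) = m / 4 := by field_simp
    rw [sum_const, card_range, nsmul_eq_mul, hL]
    linarith [hbound L]
  refine ⟨l + 1, ?_, ?_⟩
  · calc 1 / 8 * m ≤ (2⁻¹ : ℝ) ^ L := by linarith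
      _ ≤ (2⁻¹ : ℝ) ^ (l + 1) := pow_le_pow_of_le_one (by norm_num) (by norm_num) (mem_range.1 hl)
  · calc 1 / 16 * m / (1 + |Real.log m|) ≤ m / (4 * L) := by
          rw [div_le_div_iff₀ (by positivity) (by positivity)]
          nlinarith
      _ ≤ σ (l + 1) := hσ.le
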